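/- Let u : ℝ³ → ℂ be smooth with |u(x)| < 1 for all x, and satisfy the QP¹ submodel equations □u = 0 and ⟨∂u,∂u⟩ = 0. Fix integers j ≥ m ≥ 1 and define, for μ = 0,1,2, J_μ^{(j,m)} = √((j+m)!/(j(j+1)(j−m)!)) · (−iu)^{m−1}/(1−|u|²)^{j+1} · ( Σ_{n=0}^{j−m} α̃_n^{(j,m)} |u|^{2n} ∂_μu − Σ_{n=0}^{j−m} α̃_{j−m−n}^{(j,m)} |u|^{2n} u² ∂_μū ), where α̃_n^{(j,m)} = (n!/(m+n−1)!) · C(j−m,n) · C(j+1,n). Then (J₀^{(j,m)}, J₁^{(j,m)}, J₂^{(j,m)}) is a conserved current, i.e. ∂₀J₀^{(j,m)} − ∂₁J₁^{(j,m)} − ∂₂J₂^{(j,m)} = 0 on ℝ³. -/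

import Mathlib

open Complex ComplexConjugate Finset Nat

/-- Partial derivative in direction `μ` of a complex-valued function on `ℝ³`. -/
noncomputable def pd (μ : Fin 3) (f : (Fin 3 → ℝ) → ℂ) (x : Fin 3 → ℝ) : ℂ :=
  fderiv ℝ f x (Pi.single μ 1)

/-- The d'Alembertian `□u = ∂₀∂₀u − ∂₁∂₁u − ∂₂∂₂u` for the metric `diag(1,−1,−1)`. -/
noncomputable def dalembert (u : (Fin 3 → ℝ) → ℂ) (x : Fin 3 → ℝ) : ℂ :=
  pd 0 (pd 0 u) x - pd 1 (pd 1 u) x - pd 2 (pd 2 u) x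

/-- Minkowski product of gradients `⟨∂f,∂g⟩ = ∂₀f·∂₀g − ∂₁f·∂₁g − ∂₂f·∂₂g`. -/
noncomputable def minkGrad (f g : (Fin 3 → ℝ) → ℂ) (x : Fin 3 → ℝ) : ℂ :=
  pd 0 f x * pd 0 g x - pd 1 f x * pd 1 g x - pd 2 f x * pd 2 g x

/-- `(J₀,J₁,J₂)` is a conserved current if `∂₀J₀ − ∂₁J₁ − ∂₂J₂ = 0` identically. -/
def IsConservedCurrent (J : Fin 3 → (Fin 3 → ℝ) → ℂ) : Prop :=
  ∀ x, pd 0 (J 0) x - pd 1 (J 1) x - pd 2 (J 2) x = 0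

/-- The coefficient `α̃_n^{(j,m)} = (n!/(m+n−1)!) C(j−m,n) C(j+1,n)`. -/
noncomputable def alphaTildeCoeff (j m n : ℕ) : ℂ :=
  ((n ! : ℂ) / ((m + n - 1)! : ℂ)) *
    (Nat.choose (j - m) n : ℂ) * (Nat.choose (j + 1) n : ℂ)

/-- The current `J_μ^{(j,m)}` of the `QP¹` submodel, for `j ≥ m ≥ 1`. -/
noncomputable def JjmQP (u : (Fin 3 → ℝ) → ℂ) (j m : ℕ) (μ : Fin 3) (x : Fin 3 → ℝ) : ℂ :=
  (Real.sqrt (((j + m)! : ℝ) / ((j : ℝ) * ((j : ℝ) + 1) * ((j - m)! : ℝ))) : ℂ) *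
    (-Complex.I * u x) ^ (m - 1) / (1 - u x * conj (u x)) ^ (j + 1) *
    ((∑ n ∈ Finset.range (j - m + 1),
        alphaTildeCoeff j m n * (u x * conj (u x)) ^ n * pd μ u x)
      - ∑ n ∈ Finset.range (j - m + 1),
          alphaTildeCoeff j m (j - m - n) * (u x * conj (u x)) ^ n * (u x) ^ 2 *
            pd μ (fun y => conj (u y)) x)


set_option maxHeartbeats 1000000

section helpers
variable {f g : (Fin 3 → ℝ) → ℂ} {x : Fin 3 → ℝ} {μ : Fin 3}


lemma pd_add (hf : DifferentiableAt ℝ f x) (hg : DifferentiableAt ℝ g x) :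
    pd μ (fun y => f y + g y) x = pd μ f x + pd μ g x := by
  unfold pd; rw [fderiv_fun_add hf hg]; rfl

lemma pd_sub (hf : DifferentiableAt ℝ f x) (hg : DifferentiableAt ℝ g x) :
    pd μ (fun y => f y - g y) x = pd μ f x - pd μ g x := by
  unfold pd; rw [fderiv_fun_sub hf hg]; rfl

lemma pd_const (c : ℂ) : pd μ (fun _ => c) x = 0 := by
  unfold pd; rw [fderiv_fun_const]; rfl

lemma pd_mul (hf : DifferentiableAt ℝ f x) (hg : DifferentiableAt ℝ g x) :
    pd μ (fun y => f y * g y) x = pd μ f x * g x + f x * pd μ g x := by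
  unfold pd; rw [fderiv_fun_mul hf hg]
  simp [ContinuousLinearMap.add_apply, ContinuousLinearMap.smul_apply]
  ring

lemma pd_const_mul (c : ℂ) (hf : DifferentiableAt ℝ f x) :
    pd μ (fun y => c * f y) x = c * pd μ f x := by
  rw [pd_mul (differentiableAt_const c) hf, pd_const]; ring

lemma pd_conj (hf : DifferentiableAt ℝ f x) :
    pd μ (fun y => conj (f y)) x = conj (pd μ f x) := by
  unfold pd
  have : fderiv ℝ (fun y => conj (f y)) x
      = (Complex.conjCLE.toContinuousLinearMap).comp (fderiv ℝ f x) := by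
    have h := (Complex.conjCLE.toContinuousLinearMap.hasFDerivAt (x := f x)).comp x hf.hasFDerivAt
    exact h.fderiv
  rw [this]; rfl

lemma pd_pow (n : ℕ) (hf : DifferentiableAt ℝ f x) :
    pd μ (fun y => f y ^ n) x = n * f x ^ (n - 1) * pd μ f x := by
  induction n with
  | zero => simpa using pd_const (μ := μ) (x := x) 1
  | succ n ih =>
    have : (fun y => f y ^ (n+1)) = fun y => f y ^ n * f y := by
      funext y; ring
    rw [this, pd_mul (f := fun y => f y ^ n) (hf.pow n) hf, ih]
    cases n with
    | zero => simp
    | succ k =>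
      push_cast
      rw [pow_succ]
      ring

lemma pd_sum {s : Finset ℕ} {F : ℕ → (Fin 3 → ℝ) → ℂ}
    (hF : ∀ n ∈ s, DifferentiableAt ℝ (F n) x) :
    pd μ (fun y => ∑ n ∈ s, F n y) x = ∑ n ∈ s, pd μ (F n) x := by
  induction s using Finset.cons_induction with
  | empty => simpa using pd_const (μ := μ) (x := x) 0
  | cons a t ha ih =>
    simp only [Finset.sum_cons]
    rw [pd_add (hF a (Finset.mem_cons_self a t))
      (DifferentiableAt.fun_sum fun n hn => hF n (Finset.mem_cons_of_mem hn)),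
      ih fun n hn => hF n (Finset.mem_cons_of_mem hn)]

lemma pd_inv (hg : DifferentiableAt ℝ g x) (h0 : g x ≠ 0) :
    pd μ (fun y => (g y)⁻¹) x = -((g x)⁻¹)^2 * pd μ g x := by
  have hinv : DifferentiableAt ℝ (fun y => (g y)⁻¹) x := hg.inv h0
  have hne : ∀ᶠ y in nhds x, g y ≠ 0 := hg.continuousAt.eventually_ne h0
  have heq : (fun y => (g y)⁻¹ * g y) =ᶠ[nhds x] (fun _ => (1:ℂ)) :=
    hne.mono fun y hy => inv_mul_cancel₀ hy
  have h1 : pd μ (fun y => (g y)⁻¹ * g y) x = 0 := by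
    unfold pd
    rw [Filter.EventuallyEq.fderiv_eq heq, fderiv_fun_const]
    rfl
  rw [pd_mul hinv hg] at h1
  have h2 : pd μ (fun y => (g y)⁻¹) x * g x = -((g x)⁻¹ * pd μ g x) := by
    linear_combination h1
  have h3 : pd μ (fun y => (g y)⁻¹) x = -((g x)⁻¹ * pd μ g x) * (g x)⁻¹ := by
    rw [← h2, mul_inv_cancel_right₀ h0]
  rw [h3]; ring

lemma contDiff_pd (μ : Fin 3) (hf : ContDiff ℝ (⊤ : ℕ∞) f) : ContDiff ℝ (⊤ : ℕ∞) (pd μ f) := by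
  have h1 : ContDiff ℝ (⊤ : ℕ∞) (fun x => fderiv ℝ f x) := hf.fderiv_right (by simp)
  exact (ContinuousLinearMap.apply ℝ ℂ (Pi.single μ 1)).contDiff.comp h1

end helpers

section QP1aux

variable (u : (Fin 3 → ℝ) → ℂ) (j m J : ℕ)

noncomputable def Wf : (Fin 3 → ℝ) → ℂ := fun y => conj (u y)

noncomputable def Sf : (Fin 3 → ℝ) → ℂ := fun y => u y * conj (u y)

noncomputable def PPf : (Fin 3 → ℝ) → ℂ :=
  fun y => ∑ n ∈ Finset.range (J+1), alphaTildeCoeff j m n * (Sf u y)^n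

noncomputable def QQf : (Fin 3 → ℝ) → ℂ :=
  fun y => ∑ n ∈ Finset.range (J+1), alphaTildeCoeff j m (J-n) * (Sf u y)^n

noncomputable def GGf : (Fin 3 → ℝ) → ℂ := fun y => (-Complex.I * u y)^(m-1)

noncomputable def HHf : (Fin 3 → ℝ) → ℂ := fun y => ((1 - Sf u y)^(j+1))⁻¹

variable {u j m J}

lemma smooth_W (hu : ContDiff ℝ (⊤ : ℕ∞) u) : ContDiff ℝ (⊤ : ℕ∞) (Wf u) := by
  exact (Complex.conjCLE.toContinuousLinearMap).contDiff.comp hu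

lemma smooth_S (hu : ContDiff ℝ (⊤ : ℕ∞) u) : ContDiff ℝ (⊤ : ℕ∞) (Sf u) := hu.mul (smooth_W hu)

lemma dne (hdisk : ∀ y, ‖u y‖ < 1) : ∀ y, (1 : ℂ) - Sf u y ≠ 0 := by
  intro y h
  have h1 : Sf u y = 1 := by linear_combination -h
  have h2 : (Complex.normSq (u y) : ℂ) = 1 := by
    rw [← Complex.mul_conj]; exact h1
  have h3 : Complex.normSq (u y) = 1 := by exact_mod_cast h2
  have h4 : Complex.normSq (u y) < 1 := by
    have := hdisk y
    rw [← Complex.sq_norm]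
    nlinarith [norm_nonneg (u y)]
  linarith [h4, h3.ge]

lemma hne (hdisk : ∀ y, ‖u y‖ < 1) : ∀ y, ((1 : ℂ) - Sf u y)^(j+1) ≠ 0 :=
  fun y => pow_ne_zero _ (dne hdisk y)

lemma smooth_H (hu : ContDiff ℝ (⊤ : ℕ∞) u) (hdisk : ∀ y, ‖u y‖ < 1) :
    ContDiff ℝ (⊤ : ℕ∞) (HHf u j) :=
  ((contDiff_const.sub (smooth_S hu)).pow (j+1)).inv (hne hdisk)

lemma smooth_P (hu : ContDiff ℝ (⊤ : ℕ∞) u) : ContDiff ℝ (⊤ : ℕ∞) (PPf u j m J) :=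
  ContDiff.sum fun n _ => contDiff_const.mul ((smooth_S hu).pow n)

lemma smooth_Q (hu : ContDiff ℝ (⊤ : ℕ∞) u) : ContDiff ℝ (⊤ : ℕ∞) (QQf u j m J) :=
  ContDiff.sum fun n _ => contDiff_const.mul ((smooth_S hu).pow n)

lemma smooth_G (hu : ContDiff ℝ (⊤ : ℕ∞) u) : ContDiff ℝ (⊤ : ℕ∞) (GGf u m) :=
  (contDiff_const.mul hu).pow (m-1)

end QP1aux

section QP1pt
variable {u : (Fin 3 → ℝ) → ℂ} {j m J : ℕ} {x : Fin 3 → ℝ} {μ : Fin 3}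

lemma pdW (hu : ContDiff ℝ (⊤ : ℕ∞) u) : pd μ (Wf u) x = conj (pd μ u x) :=
  pd_conj ((hu.differentiable (by simp)) x)

lemma pdS (hu : ContDiff ℝ (⊤ : ℕ∞) u) :
    pd μ (Sf u) x = conj (u x) * pd μ u x + u x * conj (pd μ u x) := by
  have hd := hu.differentiable (by simp)
  have hw := (smooth_W hu).differentiable (by simp)
  have h : pd μ (fun y => u y * Wf u y) x = pd μ u x * Wf u x + u x * pd μ (Wf u) x :=
    pd_mul (hd x) (hw x)
  have e : Sf u = fun y => u y * Wf u y := rfl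
  rw [e, h, pdW hu]
  simp only [Wf]
  ring

lemma pdH (hu : ContDiff ℝ (⊤ : ℕ∞) u) (hdisk : ∀ y, ‖u y‖ < 1) :
    pd μ (HHf u j) x
      = ((j:ℂ)+1) * (1 - Sf u x)^j * (HHf u j x)^2 * pd μ (Sf u) x := by
  have hS := smooth_S hu
  have hSd := hS.differentiable (by simp)
  have hDd : DifferentiableAt ℝ (fun y => (1:ℂ) - Sf u y) x :=
    (differentiableAt_const 1).sub (hSd x)
  have hgd : DifferentiableAt ℝ (fun y => ((1:ℂ) - Sf u y)^(j+1)) x := hDd.pow _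
  have e : HHf u j = fun y => ((fun z => ((1:ℂ) - Sf u z)^(j+1)) y)⁻¹ := rfl
  rw [e, pd_inv hgd (hne hdisk x)]
  rw [pd_pow (j+1) hDd, pd_sub (differentiableAt_const 1) (hSd x), pd_const]
  have e2 : HHf u j x = (((1:ℂ) - Sf u x)^(j+1))⁻¹ := rfl
  rw [show j+1-1 = j from rfl]
  push_cast
  ring

lemma pdG (hu : ContDiff ℝ (⊤ : ℕ∞) u) :
    pd μ (GGf u m) x = ((m:ℕ)-1 : ℕ) * (-Complex.I * u x)^(m-1-1) * (-Complex.I) * pd μ u x := by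
  have hd := hu.differentiable (by simp)
  have hfd : DifferentiableAt ℝ (fun y => -Complex.I * u y) x :=
    (differentiableAt_const _).mul (hd x)
  have e : GGf u m = fun y => ((fun z => -Complex.I * u z) y)^(m-1) := rfl
  rw [e, pd_pow (m-1) hfd, pd_const_mul (-Complex.I) (hd x)]
  ring

lemma pdP (hu : ContDiff ℝ (⊤ : ℕ∞) u) :
    pd μ (PPf u j m J) x
      = (∑ n ∈ Finset.range (J+1), alphaTildeCoeff j m n * (n:ℂ) * (Sf u x)^(n-1))
          * pd μ (Sf u) x := by
  have hSd := (smooth_S hu).differentiable (by simp)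
  have e : PPf u j m J
      = fun y => ∑ n ∈ Finset.range (J+1), alphaTildeCoeff j m n * (Sf u y)^n := rfl
  rw [e, pd_sum (F := fun n y => alphaTildeCoeff j m n * (Sf u y)^n) fun n _ => (differentiableAt_const _).mul ((hSd x).pow n),
      Finset.sum_mul]
  refine Finset.sum_congr rfl fun n _ => ?_
  rw [pd_const_mul (f := fun y => (Sf u y)^n) _ ((hSd x).pow n), pd_pow n (hSd x)]
  ring

lemma pdQ (hu : ContDiff ℝ (⊤ : ℕ∞) u) :
    pd μ (QQf u j m J) x
      = (∑ n ∈ Finset.range (J+1), alphaTildeCoeff j m (J-n) * (n:ℂ) * (Sf u x)^(n-1))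
          * pd μ (Sf u) x := by
  have hSd := (smooth_S hu).differentiable (by simp)
  have e : QQf u j m J
      = fun y => ∑ n ∈ Finset.range (J+1), alphaTildeCoeff j m (J-n) * (Sf u y)^n := rfl
  rw [e, pd_sum (F := fun n y => alphaTildeCoeff j m (J-n) * (Sf u y)^n) fun n _ => (differentiableAt_const _).mul ((hSd x).pow n),
      Finset.sum_mul]
  refine Finset.sum_congr rfl fun n _ => ?_
  rw [pd_const_mul (f := fun y => (Sf u y)^n) _ ((hSd x).pow n), pd_pow n (hSd x)]
  ring

end QP1pt

lemma alpha_zero (j m n : ℕ) (hn : j - m < n) : alphaTildeCoeff j m n = 0 := by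
  unfold alphaTildeCoeff
  rw [Nat.choose_eq_zero_of_lt hn]
  simp

lemma alpha_div (j m J n : ℕ) (hm : 1 ≤ m) (hJ : j = m + J) (hn : n ≤ J) :
    alphaTildeCoeff j m n =
      ((J ! : ℂ) * ((j+1)! : ℂ)) /
        (((m+n-1)! : ℂ) * ((J-n)! : ℂ) * (n ! : ℂ) * ((j+1-n)! : ℂ)) := by
  unfold alphaTildeCoeff
  rw [show j - m = J by omega]
  rw [Nat.cast_choose ℂ hn, Nat.cast_choose ℂ (show n ≤ j + 1 by omega)]
  rw [show j + 1 - n = j + 1 - n from rfl]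
  have h1 : ((m+n-1)! : ℂ) ≠ 0 := Nat.cast_ne_zero.2 (Nat.factorial_ne_zero _)
  have h2 : ((J-n)! : ℂ) ≠ 0 := Nat.cast_ne_zero.2 (Nat.factorial_ne_zero _)
  have h3 : ((n)! : ℂ) ≠ 0 := Nat.cast_ne_zero.2 (Nat.factorial_ne_zero _)
  have h4 : ((j+1-n)! : ℂ) ≠ 0 := Nat.cast_ne_zero.2 (Nat.factorial_ne_zero _)
  field_simp

noncomputable def Sval (j m J k : ℕ) : ℂ :=
  ((j : ℂ) * (J ! : ℂ) * ((j+1)! : ℂ)) /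
    ((k ! : ℂ) * ((j-k)! : ℂ) * ((J-k)! : ℂ) * ((m+k)! : ℂ))

lemma Sclosed (j m J k : ℕ) (hm : 1 ≤ m) (hJ : j = m + J) (hk : k ≤ J) :
    ((j:ℂ)+1-k) * alphaTildeCoeff j m k + ((k:ℂ)+1) * alphaTildeCoeff j m (k+1)
      = Sval j m J k := by
  have hfac : ∀ a : ℕ, ((a)! : ℂ) ≠ 0 := fun a => Nat.cast_ne_zero.2 (Nat.factorial_ne_zero _)
  have hjc : (j:ℂ) = (m:ℂ) + (J:ℂ) := by push_cast [hJ]; ring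
  have f2 : ((m+k)! : ℂ) = ((m:ℂ)+k) * ((m+k-1)! : ℂ) := by
    rw [show m+k = (m+k-1)+1 by omega, Nat.factorial_succ]
    push_cast [show m+k-1+1 = m+k by omega]
    ring
  have f1 : ((j+1-k)! : ℂ) = ((j:ℂ)+1-k) * ((j-k)! : ℂ) := by
    rw [show j+1-k = (j-k)+1 by omega, Nat.factorial_succ]
    push_cast [Nat.cast_sub (show k ≤ j by omega)]
    ring
  have f4 : (((k+1))! : ℂ) = ((k:ℂ)+1) * ((k)! : ℂ) := by
    rw [Nat.factorial_succ]; push_cast; ring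
  have hmk : ((m:ℂ) + k) ≠ 0 := by
    have h : ((m+k : ℕ) : ℂ) = (m:ℂ)+k := by push_cast; ring
    rw [← h]; exact Nat.cast_ne_zero.2 (by omega)
  have hjk1 : ((m:ℂ) + J + 1 - k) ≠ 0 := by
    have h : ((j+1-k : ℕ):ℂ) = (m:ℂ)+J+1-k := by
      rw [Nat.cast_sub (show k ≤ j+1 by omega)]; push_cast [hjc]; ring
    rw [← h]; exact Nat.cast_ne_zero.2 (by omega)
  rcases Nat.lt_or_ge k J with hkJ | hkJ
  · -- k < J
    have f3 : ((J-k)! : ℂ) = ((J:ℂ)-k) * ((J-k-1)! : ℂ) := by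
      rw [show J-k = (J-k-1)+1 by omega, Nat.factorial_succ]
      have e : ((J-k-1 : ℕ):ℂ) = (J:ℂ)-k-1 := by
        rw [show J-k-1 = J-(k+1) by omega, Nat.cast_sub (show k+1 ≤ J by omega)]
        push_cast; ring
      push_cast [e]
      ring
    rw [alpha_div j m J k hm hJ hk, alpha_div j m J (k+1) hm hJ (by omega)]
    rw [show m+(k+1)-1 = m+k by omega, show J-(k+1) = J-k-1 by omega,
        show j+1-(k+1) = j-k by omega]
    unfold Sval
    have hDa : ((m+k-1)! : ℂ) * ((J-k)! : ℂ) * ((k)! : ℂ) * ((j+1-k)! : ℂ) ≠ 0 :=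
      mul_ne_zero (mul_ne_zero (mul_ne_zero (hfac _) (hfac _)) (hfac _)) (hfac _)
    have hDb : ((m+k)! : ℂ) * ((J-k-1)! : ℂ) * (((k+1))! : ℂ) * ((j-k)! : ℂ) ≠ 0 :=
      mul_ne_zero (mul_ne_zero (mul_ne_zero (hfac _) (hfac _)) (hfac _)) (hfac _)
    have hDc : ((k)! : ℂ) * ((j-k)! : ℂ) * ((J-k)! : ℂ) * ((m+k)! : ℂ) ≠ 0 :=
      mul_ne_zero (mul_ne_zero (mul_ne_zero (hfac _) (hfac _)) (hfac _)) (hfac _)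
    rw [← mul_div_assoc, ← mul_div_assoc, div_add_div _ _ hDa hDb,
        div_eq_div_iff (mul_ne_zero hDa hDb) hDc]
    rw [f1, f2, f3, f4, hjc]
    ring
  · -- k = J
    have hkJ' : k = J := le_antisymm hk hkJ
    subst hkJ'
    rw [alpha_div j m k k hm hJ le_rfl, alpha_zero j m (k+1) (by omega)]
    unfold Sval
    rw [show k - k = 0 by omega, show j - k = m by omega, show j+1-k = m+1 by omega,
        Nat.factorial_zero, Nat.factorial_succ m]
    simp only [Nat.cast_one]
    have hDa : ((m+k-1)! : ℂ) * (1 : ℂ) * ((k)! : ℂ) * (((m+1) * (m)! : ℕ) : ℂ) ≠ 0 := by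
      push_cast
      have h1 : ((m:ℂ)+1) ≠ 0 := by
        have := Nat.cast_ne_zero (R := ℂ).2 (show m+1 ≠ 0 by omega)
        push_cast at this; exact this
      exact mul_ne_zero (mul_ne_zero (mul_ne_zero (hfac _) one_ne_zero) (hfac _))
        (mul_ne_zero h1 (hfac _))
    have hDc : ((k)! : ℂ) * ((m)! : ℂ) * (1 : ℂ) * ((m+k)! : ℂ) ≠ 0 :=
      mul_ne_zero (mul_ne_zero (mul_ne_zero (hfac _) (hfac _)) one_ne_zero) (hfac _)
    rw [mul_zero, add_zero, ← mul_div_assoc, div_eq_div_iff hDa hDc]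
    rw [f2, hjc]
    push_cast
    ring

lemma Ssymm (j m J k : ℕ) (hJ : j = m + J) (hk : k ≤ J) :
    Sval j m J (J-k) = Sval j m J k := by
  unfold Sval
  rw [show J-(J-k) = k by omega, show j-(J-k) = m+k by omega, show m+(J-k) = j-k by omega]
  ring

lemma Lsymm (j m J k : ℕ) (hm : 1 ≤ m) (hJ : j = m + J) (hk : k ≤ J) :
    ((m:ℂ)+1+k) * alphaTildeCoeff j m (J-k) + ((J:ℂ)-k+1) * alphaTildeCoeff j m (J-k+1)
      = ((j:ℂ)+1-k) * alphaTildeCoeff j m k + ((k:ℂ)+1) * alphaTildeCoeff j m (k+1) := by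
  have hjc : (j:ℂ) = (m:ℂ) + (J:ℂ) := by push_cast [hJ]; ring
  have h1 := Sclosed j m J (J-k) hm hJ (by omega)
  have h2 := Sclosed j m J k hm hJ hk
  rw [Ssymm j m J k hJ hk] at h1
  rw [Nat.cast_sub hk] at h1
  rw [hjc] at h1 h2 ⊢
  linear_combination h1 - h2

lemma key (j m J : ℕ) (hm : 1 ≤ m) (hJ : j = m + J) (t : ℂ) :
    ((j:ℂ)+1) * (∑ n ∈ Finset.range (J+1), alphaTildeCoeff j m n * t^n)
      + (1-t) * (∑ n ∈ Finset.range (J+1), alphaTildeCoeff j m n * n * t^(n-1))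
    = ((m:ℂ)+1) * (1-t) * (∑ n ∈ Finset.range (J+1), alphaTildeCoeff j m (J-n) * t^n)
      + ((j:ℂ)+1) * t * (∑ n ∈ Finset.range (J+1), alphaTildeCoeff j m (J-n) * t^n)
      + (1-t) * t * (∑ n ∈ Finset.range (J+1), alphaTildeCoeff j m (J-n) * n * t^(n-1)) := by
  set A : ℕ → ℂ := alphaTildeCoeff j m with hA
  have hjc : (j:ℂ) = (m:ℂ) + (J:ℂ) := by push_cast [hJ]; ring
  have hz : ∀ n, J < n → A n = 0 := fun n hn => alpha_zero j m n (by omega)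
  -- canonical sums
  set S0 := ∑ n ∈ Finset.range (J+1), A n * t^n with hS0
  set S1 := ∑ n ∈ Finset.range (J+1), A n * (n:ℂ) * t^n with hS1
  set S2 := ∑ n ∈ Finset.range (J+1), ((n:ℂ)+1) * A (n+1) * t^n with hS2
  set T0 := ∑ n ∈ Finset.range (J+1), A (J-n) * t^n with hT0
  set T1 := ∑ n ∈ Finset.range (J+1), A (J-n) * (n:ℂ) * t^n with hT1
  set U0 := ∑ n ∈ Finset.range (J+1), A (J+1-n) * t^n with hU0
  set U1 := ∑ n ∈ Finset.range (J+1), A (J+1-n) * ((n:ℂ)-1) * t^n with hU1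
  -- derivative-shift lemma
  have hA1 : ∑ n ∈ Finset.range (J+1), A n * (n:ℂ) * t^(n-1) = S2 := by
    rw [hS2, Finset.sum_range_succ' (fun n => A n * (n:ℂ) * t^(n-1)) J,
        Finset.sum_range_succ (fun n => ((n:ℂ)+1) * A (n+1) * t^n) J]
    rw [hz (J+1) (by omega)]
    simp only [Nat.cast_zero, mul_zero, zero_mul, add_zero, mul_zero]
    exact Finset.sum_congr rfl fun i _ => by
      rw [show i+1-1 = i from rfl]; push_cast; ring
  have hmulS : t * (∑ n ∈ Finset.range (J+1), A n * (n:ℂ) * t^(n-1)) = S1 := by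
    rw [Finset.mul_sum, hS1]
    refine Finset.sum_congr rfl fun n _ => ?_
    cases n with
    | zero => simp
    | succ i => rw [show i+1-1 = i from rfl]; push_cast; ring
  have hmulT : t * (∑ n ∈ Finset.range (J+1), A (J-n) * (n:ℂ) * t^(n-1)) = T1 := by
    rw [Finset.mul_sum, hT1]
    refine Finset.sum_congr rfl fun n _ => ?_
    cases n with
    | zero => simp
    | succ i => rw [show i+1-1 = i from rfl]; push_cast; ring
  have hb : ∀ x ∈ Finset.range J, t * (A (J-x) * t^x) = A (J+1-(x+1)) * t^(x+1) := by
    intro x hx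
    rw [show J+1-(x+1) = J-x by omega, pow_succ]; ring
  have hB1 : t * T0 = U0 + A 0 * t^(J+1) := by
    calc t * T0 = ∑ x ∈ Finset.range J, t * (A (J-x) * t^x) + t * (A (J-J) * t^J) := by
          rw [hT0, Finset.mul_sum, Finset.sum_range_succ]
      _ = ∑ x ∈ Finset.range J, A (J+1-(x+1)) * t^(x+1) + A 0 * t^(J+1) := by
          rw [Finset.sum_congr rfl hb, show J-J = 0 by omega, pow_succ]; ring
      _ = (∑ x ∈ Finset.range J, A (J+1-(x+1)) * t^(x+1) + A (J+1-0) * t^0) + A 0 * t^(J+1) := by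
          rw [show J+1-0 = J+1 from rfl, hz (J+1) (by omega)]; ring
      _ = U0 + A 0 * t^(J+1) := by rw [hU0, Finset.sum_range_succ']
  have hb3 : ∀ x ∈ Finset.range J, t * (A (J-x) * (x:ℂ) * t^x)
      = A (J+1-(x+1)) * ((((x:ℕ)+1 : ℕ):ℂ)-1) * t^(x+1) := by
    intro x hx
    rw [show J+1-(x+1) = J-x by omega, pow_succ]; push_cast; ring
  have hB3 : t * T1 = U1 + A 0 * (J:ℂ) * t^(J+1) := by
    calc t * T1 = ∑ x ∈ Finset.range J, t * (A (J-x) * (x:ℂ) * t^x) + t * (A (J-J) * (J:ℂ) * t^J) := by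
          rw [hT1, Finset.mul_sum, Finset.sum_range_succ]
      _ = ∑ x ∈ Finset.range J, A (J+1-(x+1)) * ((((x:ℕ)+1 : ℕ):ℂ)-1) * t^(x+1)
            + A 0 * (J:ℂ) * t^(J+1) := by
          rw [Finset.sum_congr rfl hb3, show J-J = 0 by omega, pow_succ]; ring
      _ = (∑ x ∈ Finset.range J, A (J+1-(x+1)) * ((((x:ℕ)+1 : ℕ):ℂ)-1) * t^(x+1)
            + A (J+1-0) * (((0:ℕ):ℂ)-1) * t^0) + A 0 * (J:ℂ) * t^(J+1) := by
          rw [show J+1-0 = J+1 from rfl, hz (J+1) (by omega)]; ring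
      _ = U1 + A 0 * (J:ℂ) * t^(J+1) := by rw [hU1, Finset.sum_range_succ']
  -- the reflected coefficient sum
  have hR : (∑ k ∈ Finset.range (J+1),
        (((m:ℂ)+1+k) * A (J-k) + ((J:ℂ)-k+1) * A (J-k+1)) * t^k)
      = ((m:ℂ)+1) * T0 + T1 + (J:ℂ) * U0 - U1 := by
    have hsplit : ∀ k ∈ Finset.range (J+1),
        (((m:ℂ)+1+k) * A (J-k) + ((J:ℂ)-k+1) * A (J-k+1)) * t^k
        = (((m:ℂ)+1) * (A (J-k) * t^k) + A (J-k) * (k:ℂ) * t^k)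
          + ((J:ℂ) * (A (J+1-k) * t^k) - A (J+1-k) * ((k:ℂ)-1) * t^k) := by
      intro k hk
      have : J-k+1 = J+1-k := by
        have := Finset.mem_range.1 hk; omega
      rw [this]; ring
    rw [Finset.sum_congr rfl hsplit, Finset.sum_add_distrib, Finset.sum_add_distrib,
        Finset.sum_sub_distrib, ← Finset.mul_sum, ← Finset.mul_sum]
    ring
  -- per-term symmetry
  have hLR : (∑ k ∈ Finset.range (J+1),
        (((m:ℂ)+1+k) * A (J-k) + ((J:ℂ)-k+1) * A (J-k+1)) * t^k)
      = ∑ k ∈ Finset.range (J+1), (((j:ℂ)+1-k) * A k + ((k:ℂ)+1) * A (k+1)) * t^k := by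
    refine Finset.sum_congr rfl fun k hk => ?_
    have hk' : k ≤ J := by have := Finset.mem_range.1 hk; omega
    rw [hA, Lsymm j m J k hm hJ hk']
  -- coefficient form of LHS
  have hC : (∑ k ∈ Finset.range (J+1), (((j:ℂ)+1-k) * A k + ((k:ℂ)+1) * A (k+1)) * t^k)
      = ((j:ℂ)+1) * S0 + S2 - S1 := by
    rw [hS0, hS1, hS2, Finset.mul_sum, ← Finset.sum_add_distrib, ← Finset.sum_sub_distrib]
    exact Finset.sum_congr rfl fun k _ => by ring
  -- assemble
  rw [hA1]
  have e1 : ((j:ℂ)+1) * S0 + (1-t) * S2 = ((j:ℂ)+1) * S0 + S2 - t * S2 := by ring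
  rw [e1, ← hA1, hmulS, hA1, ← hC, ← hLR, hR]
  have e2 : ((m:ℂ)+1) * (1-t) * T0 + ((j:ℂ)+1) * t * T0 + (1-t) * t
        * (∑ n ∈ Finset.range (J+1), A (J-n) * (n:ℂ) * t^(n-1))
      = ((m:ℂ)+1) * T0 + ((j:ℂ)-(m:ℂ)) * (t * T0) + (t * (∑ n ∈ Finset.range (J+1),
          A (J-n) * (n:ℂ) * t^(n-1))) - t * (t * (∑ n ∈ Finset.range (J+1),
          A (J-n) * (n:ℂ) * t^(n-1))) := by ring
  rw [e2, hmulT, hB1, hB3, hjc]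
  ring

noncomputable def cst (j m : ℕ) : ℂ :=
  (Real.sqrt (((j + m)! : ℝ) / ((j : ℝ) * ((j : ℝ) + 1) * ((j - m)! : ℝ))) : ℂ)


lemma Jjm_form (u : (Fin 3 → ℝ) → ℂ) (j m J : ℕ) (hJ : j = m + J) (μ : Fin 3) :
    JjmQP u j m μ = fun y =>
      (cst j m * GGf u m y * HHf u j y) * (PPf u j m J y * pd μ u y)
      - (cst j m * GGf u m y * HHf u j y) * (QQf u j m J y * (u y)^2 * pd μ (Wf u) y) := by
  funext y
  unfold JjmQP cst GGf HHf PPf QQf Sf Wf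
  rw [show j - m = J by omega]
  rw [div_eq_mul_inv, Finset.sum_mul, Finset.sum_mul, Finset.sum_mul, mul_sub]

/-- For a solution of the `QP¹` submodel `□u = 0`, `⟨∂u,∂u⟩ = 0` with values in the
unit disk, the current `J_μ^{(j,m)}` is conserved for all `j ≥ m ≥ 1`. -/
theorem qp1_submodel_Jjm_conserved (u : (Fin 3 → ℝ) → ℂ) (hu : ContDiff ℝ (⊤ : ℕ∞) u)
    (hdisk : ∀ x, ‖u x‖ < 1)
    (hbox : ∀ x, dalembert u x = 0) (hnull : ∀ x, minkGrad u u x = 0)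
    (j m : ℕ) (hm : 1 ≤ m) (hjm : m ≤ j) :
    IsConservedCurrent (JjmQP u j m) := by
  intro x
  set J := j - m with hJdef
  have hJ : j = m + J := by omega
  -- differentiability package
  have hd := hu.differentiable (by simp)
  have hdW := (smooth_W hu).differentiable (by simp)
  have hdS := (smooth_S hu).differentiable (by simp)
  have hdG := (smooth_G (m := m) hu).differentiable (by simp)
  have hdH := (smooth_H (j := j) hu hdisk).differentiable (by simp)
  have hdP := (smooth_P (j := j) (m := m) (J := J) hu).differentiable (by simp)
  have hdQ := (smooth_Q (j := j) (m := m) (J := J) hu).differentiable (by simp)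
  have hdpdu : ∀ ν : Fin 3, Differentiable ℝ (pd ν u) :=
    fun ν => (contDiff_pd ν hu).differentiable (by simp)
  have hpdWfun : ∀ ν : Fin 3, pd ν (Wf u) = fun y => conj (pd ν u y) :=
    fun ν => funext fun y => pdW hu
  have hdpdW : ∀ ν : Fin 3, Differentiable ℝ (pd ν (Wf u)) := by
    intro ν; rw [hpdWfun ν]
    exact (smooth_W (contDiff_pd ν hu)).differentiable (by simp)
  have hpd2W : ∀ ν : Fin 3, pd ν (pd ν (Wf u)) x = conj (pd ν (pd ν u) x) := by
    intro ν; rw [hpdWfun ν]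
    exact pd_conj (hdpdu ν x)
  -- quantities
  have hSfx : Sf u x = u x * conj (u x) := rfl
  set P0 : ℂ := ∑ n ∈ Finset.range (J+1), alphaTildeCoeff j m n * (u x * conj (u x))^n
    with hP0
  set Q0 : ℂ := ∑ n ∈ Finset.range (J+1), alphaTildeCoeff j m (J-n) * (u x * conj (u x))^n
    with hQ0
  set dPv : ℂ := ∑ n ∈ Finset.range (J+1),
      alphaTildeCoeff j m n * (n:ℂ) * (u x * conj (u x))^(n-1) with hdPv
  set dQv : ℂ := ∑ n ∈ Finset.range (J+1),
      alphaTildeCoeff j m (J-n) * (n:ℂ) * (u x * conj (u x))^(n-1) with hdQv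
  have hP0x : PPf u j m J x = P0 := by rw [hP0]; rfl
  have hQ0x : QQf u j m J x = Q0 := by rw [hQ0]; rfl
  -- algebraic identities
  have hHD : HHf u j x * (1 - u x * conj (u x))^(j+1) = 1 := by
    have := hne (j := j) hdisk x
    rw [← hSfx]
    exact inv_mul_cancel₀ this
  have hkey := key j m J hm hJ (u x * conj (u x))
  have hexpr : ((j:ℂ)+1) * HHf u j x * (1 - u x * conj (u x))^j * P0 + dPv
      - ((m:ℂ)+1) * Q0
      - ((j:ℂ)+1) * HHf u j x * (1 - u x * conj (u x))^j * (u x * conj (u x)) * Q0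
      - (u x * conj (u x)) * dQv = 0 := by
    have h1 : (1 - u x * conj (u x)) *
        (((j:ℂ)+1) * HHf u j x * (1 - u x * conj (u x))^j * P0 + dPv
          - ((m:ℂ)+1) * Q0
          - ((j:ℂ)+1) * HHf u j x * (1 - u x * conj (u x))^j * (u x * conj (u x)) * Q0
          - (u x * conj (u x)) * dQv) = 0 := by
      rw [hP0, hQ0, hdPv, hdQv]
      linear_combination hkey + (((j:ℂ)+1) * P0 - ((j:ℂ)+1) * (u x * conj (u x)) * Q0) * hHD
    rcases mul_eq_zero.mp h1 with h | h
    · exact absurd h (by rw [← hSfx]; exact dne hdisk x)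
    · exact h
  have hGm : ((m-1 : ℕ) : ℂ) * (-Complex.I * u x)^(m-1-1) * (-Complex.I) * (u x)^2
      = ((m:ℂ)-1) * GGf u m x * (u x) := by
    unfold GGf
    rcases m with _ | m
    · omega
    rcases m with _ | m
    · simp
    · rw [show m+1+1-1-1 = m by omega, show m+1+1-1 = m+1 by omega, pow_succ]
      push_cast
      ring
  -- hypotheses at x
  have hN : pd 0 u x * pd 0 u x - pd 1 u x * pd 1 u x - pd 2 u x * pd 2 u x = 0 := hnull x
  have hNb : conj (pd 0 u x) * conj (pd 0 u x) - conj (pd 1 u x) * conj (pd 1 u x)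
      - conj (pd 2 u x) * conj (pd 2 u x) = 0 := by
    have := congrArg (starRingEnd ℂ) hN
    simpa using this
  have hR : pd 0 (pd 0 u) x - pd 1 (pd 1 u) x - pd 2 (pd 2 u) x = 0 := hbox x
  have hRb : conj (pd 0 (pd 0 u) x) - conj (pd 1 (pd 1 u) x) - conj (pd 2 (pd 2 u) x) = 0 := by
    have := congrArg (starRingEnd ℂ) hR
    simpa using this
  -- per-direction derivative of the current
  have hJd : ∀ μ : Fin 3, pd μ (JjmQP u j m μ) x = ((cst j m * (((m-1 : ℕ) : ℂ) * (-Complex.I * u x)^(m-1-1) * (-Complex.I) * HHf u j x + GGf u m x * (((j:ℂ)+1) * (1 - u x * conj (u x))^j * (HHf u j x)^2) * conj (u x))) * pd μ u x + (cst j m * GGf u m x * (((j:ℂ)+1) * (1 - u x * conj (u x))^j * (HHf u j x)^2) * u x) * conj (pd μ u x)) * (P0 * pd μ u x) + (cst j m * GGf u m x * HHf u j x) * (dPv * (conj (u x) * pd μ u x + u x * conj (pd μ u x)) * pd μ u x + P0 * pd μ (pd μ u) x) - (((cst j m * (((m-1 : ℕ) : ℂ) * (-Complex.I * u x)^(m-1-1)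 * (-Complex.I) * HHf u j x + GGf u m x * (((j:ℂ)+1) * (1 - u x * conj (u x))^j * (HHf u j x)^2) * conj (u x))) * pd μ u x + (cst j m * GGf u m x * (((j:ℂ)+1) * (1 - u x * conj (u x))^j * (HHf u j x)^2) * u x) * conj (pd μ u x)) * (Q0 * (u x)^2 * conj (pd μ u x)) + (cst j m * GGf u m x * HHf u j x) * ((dQv * (conj (u x) * pd μ u x + u x * conj (pd μ u x)) * (u x)^2 + Q0 * (2 * u x * pd μ u x)) * conj (pd μ u x) + Q0 * (u x)^2 * conj (pd μ (pd μ u) x))) := by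
    intro μ
    rw [Jjm_form u j m J hJ μ]
    have dK : DifferentiableAt ℝ (fun y => cst j m * GGf u m y * HHf u j y) x :=
      ((differentiableAt_const _).mul (hdG x)).mul (hdH x)
    have dPp : DifferentiableAt ℝ (fun y => PPf u j m J y * pd μ u y) x :=
      (hdP x).mul (hdpdu μ x)
    have dU2 : DifferentiableAt ℝ (fun y => QQf u j m J y * (u y)^2) x :=
      (hdQ x).mul ((hd x).pow 2)
    have dQq : DifferentiableAt ℝ (fun y => QQf u j m J y * (u y)^2 * pd μ (Wf u) y) x :=
      dU2.mul (hdpdW μ x)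
    rw [pd_sub (f := fun y => cst j m * GGf u m y * HHf u j y * (PPf u j m J y * pd μ u y)) (g := fun y => cst j m * GGf u m y * HHf u j y * (QQf u j m J y * (u y)^2 * pd μ (Wf u) y)) (dK.mul dPp) (dK.mul dQq)]
    rw [pd_mul dK dPp, pd_mul dK dQq]
    rw [pd_mul (hdP x) (hdpdu μ x), pd_mul dU2 (hdpdW μ x), pd_mul (g := fun y => (u y)^2) (hdQ x) ((hd x).pow 2)]
    rw [pd_mul (f := fun y => cst j m * GGf u m y) ((differentiableAt_const _).mul (hdG x)) (hdH x),
        pd_const_mul _ (hdG x)]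
    rw [pdG hu, pdH hu hdisk, pdP hu, pdQ hu, pdS hu, pdW hu, hpd2W μ, pd_pow 2 (hd x)]
    rw [hSfx, hP0x, hQ0x, ← hdPv, ← hdQv]
    push_cast
    ring
  rw [show (JjmQP u j m) 0 = JjmQP u j m 0 from rfl]
  rw [hJd 0, hJd 1, hJd 2]
  linear_combination ((cst j m * (((m-1 : ℕ) : ℂ) * (-Complex.I * u x)^(m-1-1) * (-Complex.I) * HHf u j x + GGf u m x * (((j:ℂ)+1) * (1 - u x * conj (u x))^j * (HHf u j x)^2) * conj (u x))) * P0 + (cst j m * GGf u m x * HHf u j x) * dPv * conj (u x)) * hN - ((cst j m * GGf u m x * (((j:ℂ)+1) * (1 - u x * conj (u x))^j * (HHf u j x)^2) * u x) * Q0 * (u x)^2 + (cst j m * GGf u m x * HHf u j x) * dQv * (u x)^3) * hNb + ((cst j m * GGf u m x * HHf u j x) * P0) * hR - ((cst j m * GGf u m x * HHf u j x) * Q0 * (u x)^2) * hRb + (cst j m * GGf u m x * HHf u j x * u x * (pd 0 u x * conj (pd 0 u x) - pd 1 u x * conj (pd 1 u x) - pd 2 u x * conj (pd 2 u x))) * hexpr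 - ((pd 0 u x * conj (pd 0 u x) - pd 1 u x * conj (pd 1 u x) - pd 2 u x * conj (pd 2 u x)) * cst j m * HHf u j x * Q0) * hGm
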